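/- arXiv:2501.13510 — 5 statements merged into one kernel-verified Lean document; each statement's English description precedes it below -/
import Mathlib

section
/- Let k be an algebraically closed field, S a finitely generated commutative k-algebra, and ∼ an equivalence relation on the set Max S of maximal ideals of S, with invariant ring S^∼. Let A be any commutative k-algebra and φ : A → S a k-algebra homomorphism such that φ⁻¹(M) = φ⁻¹(N) whenever M ∼ N. Then φ(A) ⊆ S^∼; i.e. there is a unique k-algebra homomorphism ψ : A → S^∼ whose composite with the inclusion S^∼ ↪ S equals φ. (Equivalently, π : Spec S → Spec S^∼ is a categorical quotient of Spec S by ∼ in the category of affine k-schemes.) -/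
/-- Two maximal ideals `M, N` of a `k`-algebra `S` (all of whose residue fields are `k`)
give the same value `f(M) = f(N) ∈ k` of an element `f ∈ S` iff there is a scalar `c : k`
with `f - c ∈ M` and `f - c ∈ N`. -/
def sameValue (k : Type*) {S : Type*} [CommSemiring k] [CommRing S] [Algebra k S]
    (f : S) (M N : Ideal S) : Prop :=
  ∃ c : k, f - algebraMap k S c ∈ M ∧ f - algebraMap k S c ∈ N

/-- The invariant ring `S^∼` of an equivalence relation `∼` on `Max S`:
the `k`-subalgebra of all `f ∈ S` with `f(M) = f(N)` whenever `M ∼ N`. -/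
def invariantSubalgebra (k : Type*) {S : Type*} [Field k] [CommRing S] [Algebra k S]
    (r : MaximalSpectrum S → MaximalSpectrum S → Prop) : Subalgebra k S where
  carrier := {f | ∀ M N : MaximalSpectrum S, r M N → sameValue k f M.asIdeal N.asIdeal}
  add_mem' := by
    intro a b ha hb M N h
    obtain ⟨c, hc1, hc2⟩ := ha M N h
    obtain ⟨d, hd1, hd2⟩ := hb M N h
    refine ⟨c + d, ?_, ?_⟩
    · have : a + b - algebraMap _ _ (c + d) =
        (a - algebraMap _ _ c) + (b - algebraMap _ _ d) := by rw [map_add]; ring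
      rw [this]; exact add_mem hc1 hd1
    · have : a + b - algebraMap _ _ (c + d) =
        (a - algebraMap _ _ c) + (b - algebraMap _ _ d) := by rw [map_add]; ring
      rw [this]; exact add_mem hc2 hd2
  mul_mem' := by
    intro a b ha hb M N h
    obtain ⟨c, hc1, hc2⟩ := ha M N h
    obtain ⟨d, hd1, hd2⟩ := hb M N h
    have key : a * b - algebraMap _ _ (c * d) =
        a * (b - algebraMap _ _ d) + (a - algebraMap _ _ c) * algebraMap _ _ d := by
      rw [map_mul]; ring
    refine ⟨c * d, ?_, ?_⟩
    · rw [key]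
      exact add_mem (Ideal.mul_mem_left _ _ hd1) (Ideal.mul_mem_right _ _ hc1)
    · rw [key]
      exact add_mem (Ideal.mul_mem_left _ _ hd2) (Ideal.mul_mem_right _ _ hc2)
  algebraMap_mem' := fun c M N _ => ⟨c, by simp, by simp⟩

/-!
Zariski's lemma makes the residue field `S ⧸ M` a finite, hence trivial, extension of the
algebraically closed field `k`, so `φ a - c ∈ M` for some `c ∈ k`. Then `a - c ∈ φ⁻¹(M) = φ⁻¹(N)`,
i.e. `φ a - c ∈ N`: `φ a` takes the same value `c` at `M` and at every `N ∼ M`.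
-/

theorem Ideal.IsMaximal.exists_sub_algebraMap_mem {k S : Type*} [Field k] [IsAlgClosed k]
    [CommRing S] [Algebra k S] [Algebra.FiniteType k S] {M : Ideal S} (hM : M.IsMaximal) (f : S) :
    ∃ c : k, f - algebraMap k S c ∈ M := by
  let : Field (S ⧸ M) := Ideal.Quotient.field M
  have : Algebra.FiniteType k (S ⧸ M) :=
    .of_surjective (Ideal.Quotient.mkₐ k M) Ideal.Quotient.mk_surjective
  have : Module.Finite k (S ⧸ M) := finite_of_finite_type_of_isJacobsonRing k (S ⧸ M)
  obtain ⟨c, hc⟩ :=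
    (IsAlgClosed.algebraMap_bijective_of_isIntegral (k := k)).2 (Ideal.Quotient.mk M f)
  refine ⟨c, Ideal.Quotient.eq_zero_iff_mem.mp ?_⟩
  rw [map_sub, Ideal.Quotient.mk_algebraMap, hc, sub_self]

theorem sameValue_of_comap_eq {k A S : Type*} [CommSemiring k] [Ring A] [CommRing S]
    [Algebra k A] [Algebra k S] (φ : A →ₐ[k] S) {M N : Ideal S}
    (h : M.comap (φ : A →+* S) = N.comap (φ : A →+* S)) {a : A} {c : k}
    (hc : φ a - algebraMap k S c ∈ M) : sameValue k (φ a) M N := by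
  have hφ : φ a - algebraMap k S c = φ (a - algebraMap k A c) := by rw [map_sub, φ.commutes]
  refine ⟨c, hc, ?_⟩
  rw [hφ] at hc ⊢
  exact Ideal.mem_comap.mp (h ▸ Ideal.mem_comap.mpr hc)

theorem Subalgebra.existsUnique_val_comp_eq {R A B : Type*} [CommSemiring R] [Semiring A]
    [Semiring B] [Algebra R A] [Algebra R B] {T : Subalgebra R B} {φ : A →ₐ[R] B}
    (hφ : ∀ a, φ a ∈ T) : ∃! ψ : A →ₐ[R] T, T.val.comp ψ = φ :=
  ⟨φ.codRestrict T hφ, φ.val_comp_codRestrict T hφ, fun _ hψ =>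
    (AlgHom.cancel_left Subtype.val_injective).mp (hψ.trans (φ.val_comp_codRestrict T hφ).symm)⟩

theorem stmt2_general {k S A : Type*} [Field k] [IsAlgClosed k] [CommRing S] [Algebra k S]
    [Algebra.FiniteType k S] [CommRing A] [Algebra k A]
    (r : MaximalSpectrum S → MaximalSpectrum S → Prop)
    (φ : A →ₐ[k] S)
    (hφ : ∀ M N : MaximalSpectrum S, r M N →
      M.asIdeal.comap (φ : A →+* S) = N.asIdeal.comap (φ : A →+* S)) :
    (∀ a : A, φ a ∈ invariantSubalgebra k r) ∧
      ∃! ψ : A →ₐ[k] (invariantSubalgebra k r), (invariantSubalgebra k r).val.comp ψ = φ :=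
  have hmem (a : A) : φ a ∈ invariantSubalgebra k r := fun M N hMN ↦
    have ⟨_, hc⟩ := M.isMaximal.exists_sub_algebraMap_mem (φ a)
    sameValue_of_comap_eq φ (hφ M N hMN) hc
  ⟨hmem, Subalgebra.existsUnique_val_comp_eq hmem⟩

/-- Let `k` be an algebraically closed field, `S` a finitely generated commutative `k`-algebra,
and `∼` an equivalence relation on `Max S`, with invariant ring `S^∼`. Let `A` be any
commutative `k`-algebra and `φ : A → S` a `k`-algebra homomorphism such that
`φ⁻¹(M) = φ⁻¹(N)` whenever `M ∼ N`. Then `φ(A) ⊆ S^∼`, i.e. there is a unique `k`-algebra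
homomorphism `ψ : A → S^∼` whose composite with the inclusion `S^∼ ↪ S` is `φ`.
(Equivalently, `Spec S → Spec S^∼` is a categorical quotient in affine `k`-schemes.) -/
theorem stmt2 {k S A : Type*} [Field k] [IsAlgClosed k] [CommRing S] [Algebra k S]
    [Algebra.FiniteType k S] [CommRing A] [Algebra k A]
    (r : MaximalSpectrum S → MaximalSpectrum S → Prop) (hr : Equivalence r)
    (φ : A →ₐ[k] S)
    (hφ : ∀ M N : MaximalSpectrum S, r M N →
      M.asIdeal.comap (φ : A →+* S) = N.asIdeal.comap (φ : A →+* S)) :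
    (∀ a : A, φ a ∈ invariantSubalgebra k r) ∧
      ∃! ψ : A →ₐ[k] (invariantSubalgebra k r), (invariantSubalgebra k r).val.comp ψ = φ :=
  stmt2_general r φ hφ
end

section
/- Let k be an algebraically closed field, S a finitely generated integral domain over k, ∼ an equivalence relation on Max S, and g a nonzero element of the invariant ring S^∼. The maximal ideals of the localization S_g are exactly the ideals M S_g for M ∈ Max S with g ∉ M; since g is invariant, M ∼ N implies that g ∉ M iff g ∉ N, so ∼ induces an equivalence relation ∼' on Max S_g by M S_g ∼' N S_g iff M ∼ N. Then, inside S_g, the localization (S^∼)_g of the invariant ring equals the invariant ring (S_g)^{∼'} of the localization. -/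
/-!
Membership `f - algebraMap k S c ∈ M` encodes `f(M) = c`. For a maximal ideal `M` of `S`
with `g ∉ M`, the value of `f / gⁿ ∈ S_g` at `M S_g` is `f(M) / g(M)ⁿ`, and `g(M) ≠ 0`
exactly when `g ∉ M`; since `g` is invariant, `g ∉ M` depends only on the class of `M`.
Hence `f / gⁿ` is `∼'`-invariant when `f` is `∼`-invariant. Conversely, if `x = a / gᵐ` is
`∼'`-invariant then `x = (a g) / gᵐ⁺¹` with `a g` invariant: `a g` vanishes on the classes
where `g` vanishes, and elsewhere its value is `x(M) g(M)ᵐ⁺¹`.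
-/

section Values

variable {k S : Type*} [Field k] [CommRing S] [Algebra k S]

theorem mem_iff_eq_zero_of_sub_algebraMap_mem {P : Ideal S} (hP : P ≠ ⊤) {f : S} {d : k}
    (h : f - algebraMap k S d ∈ P) : f ∈ P ↔ d = 0 := by
  have hf : f ∈ P ↔ algebraMap k S d ∈ P :=
    ⟨fun hf ↦ by simpa using P.sub_mem hf h, fun hd ↦ by simpa using P.add_mem h hd⟩
  refine hf.trans ⟨fun hd ↦ ?_, fun hd ↦ by simp [hd]⟩
  by_contra hd0
  exact hP (P.eq_top_of_isUnit_mem hd ((Ne.isUnit hd0).map (algebraMap k S)))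

theorem mul_pow_sub_algebraMap_mem_iff {P : Ideal S} {x u : S} {c d : k} (hd : d ≠ 0)
    (hu : u - algebraMap k S d ∈ P) (n : ℕ) :
    x * u ^ n - algebraMap k S (c * d ^ n) ∈ P ↔ x - algebraMap k S c ∈ P := by
  rw [← Ideal.Quotient.eq] at hu
  simp only [← Ideal.Quotient.eq, map_mul, map_pow, Ideal.Quotient.mk_algebraMap] at hu ⊢
  rw [hu]
  exact (((Ne.isUnit hd).map (algebraMap k (S ⧸ P))).pow n).mul_left_inj

end Values

section Localization

variable {S L : Type*} [CommRing S] {g : S} [CommRing L] [Algebra S L] [IsLocalization.Away g L]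

theorem Ideal.under_map_of_notMem {P : Ideal S} (hP : P.IsPrime) (hg : g ∉ P) :
    (P.map (algebraMap S L)).under S = P :=
  IsLocalization.under_map_of_isPrime_disjoint (.powers g) L hP
    ((Ideal.disjoint_powers_iff_notMem g hP.isRadical).mpr hg)

theorem Ideal.isMaximal_map_of_notMem {M : Ideal S} (hM : M.IsMaximal) (hg : g ∉ M) :
    (M.map (algebraMap S L)).IsMaximal := by
  have : ((M.map (algebraMap S L)).under S).IsMaximal := by
    rwa [Ideal.under_map_of_notMem hM.isPrime hg]
  exact .of_isLocalization_of_disjoint (.powers g)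

end Localization

section LocalizedValues

variable {k S L : Type*} [Field k] [CommRing S] [Algebra k S] {g : S}
  [CommRing L] [Algebra S L] [Algebra k L] [IsScalarTower k S L] [IsLocalization.Away g L]

theorem algebraMap_sub_algebraMap (y : S) (c : k) :
    algebraMap S L y - algebraMap k L c = algebraMap S L (y - algebraMap k S c) := by
  rw [map_sub, ← IsScalarTower.algebraMap_apply]

variable (L) in
theorem algebraMap_sub_algebraMap_mem_map_iff {P : Ideal S} (hP : P.IsPrime) (hg : g ∉ P)
    (y : S) (c : k) :
    algebraMap S L y - algebraMap k L c ∈ P.map (algebraMap S L) ↔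
      y - algebraMap k S c ∈ P := by
  rw [algebraMap_sub_algebraMap, ← Ideal.mem_comap, ← Ideal.under_def,
    Ideal.under_map_of_notMem hP hg]

theorem sub_algebraMap_mem_map_of_mul_pow_eq {M : Ideal S} (hM : M.map (algebraMap S L) ≠ ⊤)
    {x : L} {f : S} {n : ℕ} (hxf : x * algebraMap S L g ^ n = algebraMap S L f) {c d : k}
    (hf : f - algebraMap k S c ∈ M) (hg : g - algebraMap k S d ∈ M) :
    x - algebraMap k L (c / d ^ n) ∈ M.map (algebraMap S L) := by
  have hgd : algebraMap S L g - algebraMap k L d ∈ M.map (algebraMap S L) := by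
    rw [algebraMap_sub_algebraMap]; exact Ideal.mem_map_of_mem _ hg
  have hd : d ≠ 0 := fun hd ↦ hM <| Ideal.eq_top_of_isUnit_mem _
    ((mem_iff_eq_zero_of_sub_algebraMap_mem hM hgd).mpr hd)
    (IsLocalization.Away.algebraMap_isUnit g)
  rw [← mul_pow_sub_algebraMap_mem_iff hd hgd n, div_mul_cancel₀ _ (pow_ne_zero n hd), hxf,
    algebraMap_sub_algebraMap]
  exact Ideal.mem_map_of_mem _ hf

theorem sub_algebraMap_mem_of_mul_pow_eq {M : Ideal S} (hM : M.IsPrime) (hgM : g ∉ M)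
    {x : L} {y : S} {n : ℕ} (hxy : x * algebraMap S L g ^ n = algebraMap S L y) {c d : k}
    (hg : g - algebraMap k S d ∈ M) (hx : x - algebraMap k L c ∈ M.map (algebraMap S L)) :
    y - algebraMap k S (c * d ^ n) ∈ M := by
  have hd : d ≠ 0 := fun hd ↦ hgM ((mem_iff_eq_zero_of_sub_algebraMap_mem hM.ne_top hg).mpr hd)
  have hgd := (algebraMap_sub_algebraMap_mem_map_iff L hM hgM g d).mpr hg
  rw [← algebraMap_sub_algebraMap_mem_map_iff L hM hgM, ← hxy,
    mul_pow_sub_algebraMap_mem_iff hd hgd]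
  exact hx

end LocalizedValues

theorem stmt3_general {k S : Type*} [Field k] [CommRing S] [Algebra k S]
    (r : MaximalSpectrum S → MaximalSpectrum S → Prop)
    (g : S) (hg : g ∈ invariantSubalgebra k r)
    (r' : MaximalSpectrum (Localization.Away g) → MaximalSpectrum (Localization.Away g) → Prop)
    (hr' : ∀ M' N', r' M' N' ↔ ∃ M N : MaximalSpectrum S, r M N ∧
      M'.asIdeal = M.asIdeal.map (algebraMap S (Localization.Away g)) ∧
      N'.asIdeal = N.asIdeal.map (algebraMap S (Localization.Away g)))
    (x : Localization.Away g) :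
    (∃ f ∈ invariantSubalgebra k r, ∃ n : ℕ,
        x * algebraMap S (Localization.Away g) g ^ n = algebraMap S (Localization.Away g) f) ↔
      x ∈ invariantSubalgebra k (S := Localization.Away g) r' := by
  constructor
  · rintro ⟨f, hf, n, hxf⟩ M' N' hMN'
    obtain ⟨M, N, hMN, hM', hN'⟩ := (hr' M' N').mp hMN'
    obtain ⟨c, hcM, hcN⟩ := hf M N hMN
    obtain ⟨d, hdM, hdN⟩ := hg M N hMN
    refine ⟨c / d ^ n, ?_, ?_⟩
    · rw [hM']
      exact sub_algebraMap_mem_map_of_mul_pow_eq (hM' ▸ M'.2.ne_top) hxf hcM hdM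
    · rw [hN']
      exact sub_algebraMap_mem_map_of_mul_pow_eq (hN' ▸ N'.2.ne_top) hxf hcN hdN
  · intro hx
    obtain ⟨m, a, hxa⟩ := IsLocalization.Away.surj g x
    have hxag : x * algebraMap S _ g ^ (m + 1) = algebraMap S _ (a * g) := by
      rw [pow_succ, ← mul_assoc, hxa, map_mul]
    refine ⟨a * g, fun M N hMN ↦ ?_, m + 1, hxag⟩
    obtain ⟨d, hdM, hdN⟩ := hg M N hMN
    by_cases hd : d = 0
    · subst hd
      simp only [map_zero, sub_zero] at hdM hdN
      exact ⟨0, by simpa using M.asIdeal.mul_mem_left a hdM,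
        by simpa using N.asIdeal.mul_mem_left a hdN⟩
    have hgM := (mem_iff_eq_zero_of_sub_algebraMap_mem M.2.ne_top hdM).not.mpr hd
    have hgN := (mem_iff_eq_zero_of_sub_algebraMap_mem N.2.ne_top hdN).not.mpr hd
    obtain ⟨c, hcM, hcN⟩ := hx ⟨_, Ideal.isMaximal_map_of_notMem M.2 hgM⟩
      ⟨_, Ideal.isMaximal_map_of_notMem N.2 hgN⟩ ((hr' _ _).mpr ⟨M, N, hMN, rfl, rfl⟩)
    exact ⟨c * d ^ (m + 1), sub_algebraMap_mem_of_mul_pow_eq M.2.isPrime hgM hxag hdM hcM,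
      sub_algebraMap_mem_of_mul_pow_eq N.2.isPrime hgN hxag hdN hcN⟩

/-- Let `k` be an algebraically closed field, `S` a finitely generated integral domain over
`k`, `∼` an equivalence relation on `Max S`, and `g` a nonzero element of the invariant ring
`S^∼`. The maximal ideals of `S_g` are exactly the `M S_g` for `M ∈ Max S` with `g ∉ M`, and
`∼` induces the equivalence relation `∼'` on `Max S_g` with `M S_g ∼' N S_g ↔ M ∼ N`.
Then, inside `S_g`, the localization `(S^∼)_g` of the invariant ring (the set of elements of
the form `f / gⁿ` with `f ∈ S^∼`) equals the invariant ring `(S_g)^{∼'}` of the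
localization. -/
theorem stmt3 {k S : Type*} [Field k] [IsAlgClosed k] [CommRing S] [IsDomain S] [Algebra k S]
    [Algebra.FiniteType k S]
    (r : MaximalSpectrum S → MaximalSpectrum S → Prop) (hr : Equivalence r)
    (g : S) (hg : g ∈ invariantSubalgebra k r) (hg0 : g ≠ 0)
    (r' : MaximalSpectrum (Localization.Away g) → MaximalSpectrum (Localization.Away g) → Prop)
    (hr' : ∀ M' N', r' M' N' ↔ ∃ M N : MaximalSpectrum S, r M N ∧
      M'.asIdeal = M.asIdeal.map (algebraMap S (Localization.Away g)) ∧
      N'.asIdeal = N.asIdeal.map (algebraMap S (Localization.Away g)))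
    (x : Localization.Away g) :
    (∃ f ∈ invariantSubalgebra k r, ∃ n : ℕ,
        x * algebraMap S (Localization.Away g) g ^ n = algebraMap S (Localization.Away g) f) ↔
      x ∈ invariantSubalgebra k (S := Localization.Away g) r' :=
  stmt3_general r g hg r' hr' x
end

section
/- Let k be an uncountable algebraically closed field, X a k-scheme of finite type, Y a k-scheme, and π : X → Y a morphism of k-schemes such that for every open subset U of Y the pullback map O_Y(U) → O_X(π⁻¹(U)) on sections is injective. Then Y is a Jacobson scheme; in particular the underlying topological space of Y is a Jacobson space. -/
/-!
If `b ≠ 0` lies in the Jacobson radical of a domain `B` over an infinite field `k`, then every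
`b - a` with `a ∈ kˣ` is a unit and `b` is transcendental, so the inverses `(b - a)⁻¹` form a
linearly independent family of size `#k` in `B`. Hence a `k`-algebra of dimension `< #k` is a
Jacobson ring.

On a `k`-scheme `X` of finite type, which is noetherian, the sections over any open `W` embed into
the sections over finitely many affine opens, which are finitely generated `k`-algebras; so
`O_X(W)` has countable dimension. Injectivity of `O_Y(U) → O_X(π⁻¹U)` passes this to `O_Y(U)`,
which is therefore Jacobson when `k` is uncountable, and a scheme covered by spectra of Jacobson
rings is a Jacobson space.
-/

open Cardinal AlgebraicGeometry CategoryTheory TopologicalSpace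

universe u

section SmallRank

variable {k B : Type u} [Field k] [CommRing B] [Algebra k B]

lemma isUnit_sub_algebraMap_of_mem_jacobson_bot {b : B} (hb : b ∈ (⊥ : Ideal B).jacobson)
    {a : k} (ha : a ≠ 0) : IsUnit (b - algebraMap k B a) := by
  have hinv : algebraMap k B a⁻¹ * algebraMap k B a = 1 := by
    rw [← map_mul, inv_mul_cancel₀ ha, map_one]
  convert (Ideal.mem_jacobson_bot.mp hb (-algebraMap k B a⁻¹)).mul
    ((IsUnit.mk0 a ha).map (algebraMap k B)).neg using 1
  linear_combination (-b) * hinv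

lemma Transcendental.linearIndependent_inv_sub_of_isUnit [IsDomain B] {b : B}
    (hb : Transcendental k b) {S : Set k} (hS : ∀ a ∈ S, IsUnit (b - algebraMap k B a)) :
    LinearIndependent k fun a : S ↦ (↑(hS a a.2).unit⁻¹ : B) := by
  let L := FractionRing B
  have hBL : Function.Injective (algebraMap B L) := IsFractionRing.injective B L
  have hbL : Transcendental k (algebraMap B L b) := (transcendental_algebraMap_iff hBL).2 hb
  refine LinearIndependent.of_comp (IsScalarTower.toAlgHom k B L).toLinearMap ?_
  convert hbL.linearIndependent_sub_inv.comp ((↑) : S → k) Subtype.val_injective using 1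
  ext a
  simp only [Function.comp_apply, AlgHom.toLinearMap_apply, IsScalarTower.toAlgHom_apply]
  refine eq_inv_of_mul_eq_one_left ?_
  rw [IsScalarTower.algebraMap_apply k B L, ← map_sub, ← map_mul, IsUnit.val_inv_mul, map_one]

lemma Ideal.jacobson_bot_eq_bot_of_rank_lt [Infinite k] [IsDomain B]
    (h : Module.rank k B < #k) : (⊥ : Ideal B).jacobson = ⊥ := by
  refine eq_bot_iff.mpr fun b hb ↦ (Submodule.mem_bot k).mpr ?_
  by_contra hb0
  have htr : Transcendental k b := fun halg ↦ bot_ne_top <| Ideal.jacobson_eq_top_iff.mp <|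
    Ideal.eq_top_of_isUnit_mem _ hb (halg.isIntegral.isUnit hb0)
  have hunit (a : k) (ha : a ∈ ({0}ᶜ : Set k)) : IsUnit (b - algebraMap k B a) :=
    isUnit_sub_algebraMap_of_mem_jacobson_bot hb ha
  have hcard : #({0}ᶜ : Set k) = #k :=
    mk_compl_of_infinite _ (by simpa using one_lt_aleph0.trans_le (aleph0_le_mk k))
  exact h.not_ge (hcard ▸ (htr.linearIndependent_inv_sub_of_isUnit hunit).cardinal_le_rank)

theorem isJacobsonRing_of_rank_lt [Infinite k] (h : Module.rank k B < #k) : IsJacobsonRing B := by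
  refine isJacobsonRing_iff_prime_eq.mpr fun P _ ↦ ?_
  rw [Ideal.jacobson_eq_iff_jacobson_quotient_eq_bot]
  exact Ideal.jacobson_bot_eq_bot_of_rank_lt <|
    ((Ideal.Quotient.mkₐ k P).toLinearMap.rank_le_of_surjective
      (Ideal.Quotient.mkₐ_surjective k P)).trans_lt h

end SmallRank

section RingHomRank

variable {k A : Type u} [Field k] [CommRing A]

-- Sections of a `k`-scheme get their `k`-structure from a morphism, not from an instance.
noncomputable def RingHom.rank (f : k →+* A) : Cardinal.{u} :=
  letI := f.toAlgebra
  Module.rank k A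

lemma RingHom.rank_le_of_injective {B : Type u} [CommRing B] (f : k →+* A) (g : A →+* B)
    (hg : Function.Injective g) : f.rank ≤ (g.comp f).rank := by
  let := f.toAlgebra
  let := (g.comp f).toAlgebra
  exact LinearMap.rank_le_of_injective
    ({ g with commutes' := fun _ ↦ rfl } : A →ₐ[k] B).toLinearMap hg

lemma RingHom.FiniteType.rank_le_aleph0 {f : k →+* A} (hf : f.FiniteType) : f.rank ≤ ℵ₀ := by
  let := f.toAlgebra
  obtain ⟨ι, _, g, hg⟩ := Algebra.FiniteType.iff_quotient_mvPolynomial'.mp hf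
  calc Module.rank k A ≤ Module.rank k (MvPolynomial ι k) :=
        LinearMap.rank_le_of_surjective g.toLinearMap hg
    _ = #(ι →₀ ℕ) := MvPolynomial.rank_eq
    _ ≤ ℵ₀ := mk_le_aleph0

lemma RingHom.rank_le_aleph0_of_injective_pi {ι : Type u} [_root_.Finite ι] {B : ι → Type u}
    [∀ i, CommRing (B i)] (f : k →+* A) (g : ∀ i, A →+* B i)
    (hg : Function.Injective (RingHom.pi g)) (h : ∀ i, ((g i).comp f).rank ≤ ℵ₀) :
    f.rank ≤ ℵ₀ := by
  let := f.toAlgebra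
  let (i : ι) : Algebra k (B i) := ((g i).comp f).toAlgebra
  let G : A →ₗ[k] ∀ i, B i :=
    LinearMap.pi fun i ↦ ({ g i with commutes' := fun _ ↦ rfl } : A →ₐ[k] B i).toLinearMap
  cases nonempty_fintype ι
  calc Module.rank k A ≤ Module.rank k (∀ i, B i) := LinearMap.rank_le_of_injective G hg
    _ = Cardinal.sum fun i ↦ Module.rank k (B i) := rank_pi
    _ ≤ Cardinal.sum fun _ : ι ↦ ℵ₀ := Cardinal.sum_le_sum _ _ h
    _ ≤ ℵ₀ := by
      simpa using (mul_le_mul_left natCast_lt_aleph0.le ℵ₀).trans aleph0_mul_aleph0.le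

end RingHomRank

namespace AlgebraicGeometry

variable {k : Type u} [Field k] {X : Scheme.{u}} (sX : X ⟶ Spec (.of k))

noncomputable def Scheme.Hom.algebraMapΓ (W : X.Opens) : CommRingCat.of k ⟶ Γ(X, W) :=
  (Scheme.ΓSpecIso (.of k)).inv ≫ sX.appLE ⊤ W (show W ≤ sX ⁻¹ᵁ ⊤ from le_top)

lemma Scheme.Hom.algebraMapΓ_comp_map {W W' : X.Opens} (h : W' ≤ W) :
    sX.algebraMapΓ W ≫ X.presheaf.map (homOfLE h).op = sX.algebraMapΓ W' := by
  rw [algebraMapΓ, algebraMapΓ, Category.assoc, Scheme.Hom.appLE_map]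

lemma Scheme.Hom.algebraMapΓ_comp_app {Y : Scheme.{u}} (π : X ⟶ Y) (sY : Y ⟶ Spec (.of k))
    (U : Y.Opens) : sY.algebraMapΓ U ≫ π.app U = (π ≫ sY).algebraMapΓ (π ⁻¹ᵁ U) := by
  rw [algebraMapΓ, algebraMapΓ, Category.assoc, Scheme.Hom.app_eq_appLE,
    Scheme.Hom.appLE_comp_appLE]

lemma Scheme.Hom.finiteType_algebraMapΓ [LocallyOfFiniteType sX] {V : X.Opens}
    (hV : IsAffineOpen V) : (sX.algebraMapΓ V).hom.FiniteType :=
  (HasRingHomProperty.appLE @LocallyOfFiniteType sX inferInstance ⟨⊤, isAffineOpen_top _⟩ ⟨V, hV⟩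
    (by simp)).comp (RingHom.FiniteType.of_surjective _
      (Scheme.ΓSpecIso (.of k)).commRingCatIsoToRingEquiv.symm.surjective)

lemma Scheme.Hom.rank_algebraMapΓ_le_aleph0 [LocallyOfFiniteType sX] {W : X.Opens}
    (hW : IsCompact (W : Set X)) : (sX.algebraMapΓ W).hom.rank ≤ ℵ₀ := by
  obtain ⟨s, hs, rfl⟩ := isCompact_iff_finite_and_eq_biUnion_affineOpens.mp hW
  have : Finite s := hs
  have hle (V : s) : (V : X.Opens) ≤ ⨆ V ∈ s, (V : X.Opens) := le_biSup _ V.2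
  refine RingHom.rank_le_aleph0_of_injective_pi _
    (fun V : s ↦ (X.presheaf.map (homOfLE (hle V)).op).hom) ?_ fun V ↦ ?_
  · refine (injective_iff_map_eq_zero _).mpr fun x hx ↦ X.sheaf.eq_of_locally_eq'
      (fun V : s ↦ (V : X.Opens)) _ (fun V ↦ homOfLE (hle V))
      (iSup₂_le fun V hV ↦ le_iSup (fun V : s ↦ (V : X.Opens)) ⟨V, hV⟩) x 0 fun V ↦ ?_
    rw [map_zero]
    exact congrFun hx V
  · rw [← CommRingCat.hom_comp, algebraMapΓ_comp_map]
    exact (sX.finiteType_algebraMapΓ V.1.2).rank_le_aleph0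

lemma Scheme.jacobsonSpace_of_forall_isJacobsonRing {Y : Scheme.{u}}
    (h : ∀ U : Y.affineOpens, IsJacobsonRing Γ(Y, U)) : JacobsonSpace Y := by
  rw [(show IsOpenCover (fun U : Y.affineOpens ↦ (U : Y.Opens)) from
    iSup_affineOpens_eq_top Y).jacobsonSpace_iff]
  exact fun U ↦ have := h U; .of_isOpenEmbedding U.2.isoSpec.hom.isOpenEmbedding

end AlgebraicGeometry

theorem stmt5_general {k : Type} [Field k] [Uncountable k]
    (X Y : Scheme) (sX : X ⟶ Spec (CommRingCat.of k)) (sY : Y ⟶ Spec (CommRingCat.of k))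
    [LocallyOfFiniteType sX] [QuasiCompact sX]
    (π : X ⟶ Y) (hπ : π ≫ sY = sX)
    (hinj : ∀ U : Y.Opens, Function.Injective (π.app U)) :
    JacobsonSpace Y := by
  subst hπ
  have : IsNoetherian X :=
    { toIsLocallyNoetherian := LocallyOfFiniteType.isLocallyNoetherian (π ≫ sY)
      toCompactSpace := QuasiCompact.compactSpace_of_compactSpace (π ≫ sY) }
  refine Scheme.jacobsonSpace_of_forall_isJacobsonRing fun U ↦ ?_
  have hrank : (sY.algebraMapΓ U).hom.rank ≤ ℵ₀ := by
    have h := RingHom.rank_le_of_injective (sY.algebraMapΓ U).hom _ (hinj U)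
    rw [← CommRingCat.hom_comp, Scheme.Hom.algebraMapΓ_comp_app] at h
    exact h.trans ((π ≫ sY).rank_algebraMapΓ_le_aleph0 (NoetherianSpace.isCompact _))
  let := (sY.algebraMapΓ U).hom.toAlgebra
  exact isJacobsonRing_of_rank_lt (hrank.trans_lt (aleph0_lt_mk_iff.mpr ‹_›))

/-- Let `k` be an uncountable algebraically closed field, `X` a `k`-scheme of finite type
(i.e. the structure morphism is locally of finite type and quasi-compact), `Y` a `k`-scheme,
and `π : X → Y` a morphism of `k`-schemes such that for every open `U ⊆ Y` the pullback
`O_Y(U) → O_X(π⁻¹(U))` on sections is injective. Then `Y` is a Jacobson scheme; in particular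
its underlying topological space is a Jacobson space. -/
theorem stmt5 {k : Type} [Field k] [IsAlgClosed k] [Uncountable k]
    (X Y : Scheme) (sX : X ⟶ Spec (CommRingCat.of k)) (sY : Y ⟶ Spec (CommRingCat.of k))
    [LocallyOfFiniteType sX] [QuasiCompact sX]
    (π : X ⟶ Y) (hπ : π ≫ sY = sX)
    (hinj : ∀ U : Y.Opens, Function.Injective (π.app U)) :
    JacobsonSpace Y :=
  stmt5_general X Y sX sY π hπ hinj
end

section
/- Let k be an algebraically closed field, S a finitely generated commutative k-algebra, and R a k-subalgebra of S such that the pair (R,S) satisfies the relative weak Nullstellensatz, i.e. IS ≠ S for every proper ideal I of R. Then for every ideal I of R, { M ∩ R : M ∈ Max S and IS ⊆ M } = { m ∈ Max R : I ⊆ m }. In particular, the image under the contraction map π_max : Max S → Max R, M ↦ M ∩ R, of the closed subset { M ∈ Max S : IS ⊆ M } of Max S is the closed subset { m ∈ Max R : I ⊆ m } of Max R. -/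
/-!
By Zariski's lemma the residue field `S ⧸ M` at a maximal ideal of `S` is finite over `k`, hence
equal to `k`; as `k ⊆ R`, the composite `R → S ⧸ M` is onto and `M ∩ R` is maximal. Conversely,
for a maximal `m ⊇ I` the hypothesis `mS ≠ S` yields a maximal `M ⊇ mS`, and `M ∩ R ⊇ m` forces
`M ∩ R = m` by maximality of `m`.
-/

theorem Ideal.algebraMap_quotient_surjective_of_isAlgClosed {k S : Type*} [Field k]
    [IsAlgClosed k] [CommRing S] [Algebra k S] [Algebra.FiniteType k S]
    (M : Ideal S) [M.IsMaximal] : Function.Surjective (algebraMap k (S ⧸ M)) := by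
  let := Ideal.Quotient.field M
  have := finite_of_finite_type_of_isJacobsonRing k (S ⧸ M)
  exact IsAlgClosed.algebraMap_bijective_of_isIntegral.2

theorem Ideal.isMaximal_comap_of_algebraMap_quotient_surjective {k A B : Type*} [CommRing k]
    [CommRing A] [CommRing B] [Algebra k A] [Algebra k B] (f : A →ₐ[k] B) (M : Ideal B)
    [M.IsMaximal] (h : Function.Surjective (algebraMap k (B ⧸ M))) :
    (M.comap f).IsMaximal := by
  have hsurj : Function.Surjective ((Ideal.Quotient.mkₐ k M).comp f) := fun x ↦ by
    obtain ⟨c, rfl⟩ := h x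
    exact ⟨algebraMap k A c, by simp⟩
  have hker : RingHom.ker ((Ideal.Quotient.mkₐ k M).comp f) = M.comap f := by
    ext; simp [Ideal.Quotient.eq_zero_iff_mem]
  rw [← hker]
  let := Ideal.Quotient.field M
  exact RingHom.ker_isMaximal_of_surjective _ hsurj

theorem Ideal.isMaximal_comap_of_isAlgClosed {k A S : Type*} [Field k] [IsAlgClosed k]
    [CommRing A] [CommRing S] [Algebra k A] [Algebra k S] [Algebra.FiniteType k S]
    (f : A →ₐ[k] S) (M : Ideal S) [M.IsMaximal] : (M.comap f).IsMaximal :=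
  isMaximal_comap_of_algebraMap_quotient_surjective f M
    (algebraMap_quotient_surjective_of_isAlgClosed M)

theorem Ideal.exists_isMaximal_comap_eq_of_map_ne_top {A B : Type*} [CommRing A] [CommRing B]
    (f : A →+* B) {m : Ideal A} (hm : m.IsMaximal) (h : m.map f ≠ ⊤) :
    ∃ M : Ideal B, M.IsMaximal ∧ M.comap f = m := by
  obtain ⟨M, hM, hmM⟩ := Ideal.exists_le_maximal _ h
  refine ⟨M, hM, (hm.eq_of_le (Ideal.comap_ne_top f hM.ne_top) ?_).symm⟩
  exact Ideal.map_le_iff_le_comap.mp hmM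

/-- Let `k` be an algebraically closed field, `S` a finitely generated commutative `k`-algebra,
and `R` a `k`-subalgebra of `S` such that the pair `(R,S)` satisfies the relative weak
Nullstellensatz, i.e. `IS ≠ S` for every proper ideal `I` of `R`. Then for every ideal `I` of
`R`, `{ M ∩ R : M ∈ Max S, IS ⊆ M } = { m ∈ Max R : I ⊆ m }`; in particular the image under
the contraction map `Max S → Max R` of the closed subset of `Max S` defined by `IS` is the
closed subset of `Max R` defined by `I`. -/
theorem stmt15 {k S : Type*} [Field k] [IsAlgClosed k] [CommRing S] [Algebra k S]
    [Algebra.FiniteType k S] (R : Subalgebra k S)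
    (hRWN : ∀ I : Ideal R, I ≠ ⊤ → I.map (algebraMap R S) ≠ ⊤)
    (I : Ideal R) :
    {m : Ideal R | ∃ M : Ideal S, M.IsMaximal ∧ I.map (algebraMap R S) ≤ M ∧
        M.comap (algebraMap R S) = m} =
      {m : Ideal R | m.IsMaximal ∧ I ≤ m} := by
  ext m
  constructor
  · rintro ⟨M, hM, hIM, rfl⟩
    exact ⟨Ideal.isMaximal_comap_of_isAlgClosed R.val M, Ideal.map_le_iff_le_comap.mp hIM⟩
  · rintro ⟨hm, hIm⟩
    obtain ⟨M, hM, rfl⟩ := Ideal.exists_isMaximal_comap_eq_of_map_ne_top _ hm (hRWN m hm.ne_top)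
    exact ⟨M, hM, Ideal.map_le_iff_le_comap.mpr hIm, rfl⟩
end

section
/- Let k be an uncountable field and let R be a commutative k-algebra whose dimension as a k-vector space is countable. Then R is a Jacobson ring. -/
/-!
If `f` lies in the Jacobson radical of a domain `S` over `k`, then `f - a` is a unit for every
nonzero `a : k`. Were `f` transcendental, the inverses `(f - a)⁻¹` would be linearly independent,
so `S` would have dimension at least `#k > ℵ₀`; hence `f` is algebraic, and a nonzero algebraic
element of a domain is a unit, which the Jacobson radical cannot contain. So domains of countable
dimension have zero Jacobson radical, and applying this to `R ⧸ P` for every prime `P` shows that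
`R` is Jacobson.
-/

open Cardinal

theorem Ideal.isUnit_sub_algebraMap_of_mem_jacobson_bot {k S : Type*} [Field k] [CommRing S]
    [Algebra k S] {f : S} (hf : f ∈ (⊥ : Ideal S).jacobson) {a : k} (ha : a ≠ 0) :
    IsUnit (f - algebraMap k S a) := by
  have hfac : f - algebraMap k S a = (f * algebraMap k S (-a⁻¹) + 1) * algebraMap k S (-a) := by
    rw [add_mul, mul_assoc, ← map_mul, neg_mul_neg, inv_mul_cancel₀ ha, map_one, map_neg]
    ring
  rw [hfac]
  exact (mem_jacobson_bot.mp hf _).mul ((neg_ne_zero.mpr ha).isUnit.map _)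

theorem Transcendental.linearIndependent_inv_of_isUnit_sub {k S : Type*} [Field k] [CommRing S]
    [IsDomain S] [Algebra k S] {x : S} (hx : Transcendental k x) {s : Set k}
    (hs : ∀ a ∈ s, IsUnit (x - algebraMap k S a)) :
    LinearIndependent k fun a : s ↦ ((hs a a.2).unit⁻¹ : Sˣ).val := by
  let ι := IsScalarTower.toAlgHom k S (FractionRing S)
  have hι : Function.Injective ι := IsFractionRing.injective S (FractionRing S)
  refine .of_comp ι.toLinearMap ?_
  convert ((transcendental_algebraMap_iff hι).mpr hx).linearIndependent_sub_inv.comp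
    ((↑) : s → k) Subtype.val_injective
  ext a
  simp [ι, map_units_inv, ← IsScalarTower.algebraMap_apply]

theorem LinearIndependent.countable_of_rank_le_aleph0 {k M ι : Type*} [Field k]
    [AddCommGroup M] [Module k M] {v : ι → M} (hv : LinearIndependent k v)
    (h : Module.rank k M ≤ ℵ₀) : Countable ι := by
  have := hv.cardinal_lift_le_rank.trans (lift_le.mpr h)
  rwa [lift_aleph0, lift_le_aleph0, mk_le_aleph0_iff] at this

theorem Ideal.jacobson_bot_eq_bot_of_rank_le_aleph0 {k S : Type*} [Field k] [Uncountable k]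
    [CommRing S] [IsDomain S] [Algebra k S] (h : Module.rank k S ≤ ℵ₀) :
    (⊥ : Ideal S).jacobson = ⊥ := by
  refine eq_bot_iff.mpr fun f hf ↦ ?_
  by_cases halg : IsAlgebraic k f
  · by_contra hf0
    have hunit : IsUnit f := halg.isIntegral.isUnit hf0
    exact bot_ne_top (jacobson_eq_top_iff.mp (eq_top_of_isUnit_mem _ hf hunit))
  · have hli := Transcendental.linearIndependent_inv_of_isUnit_sub halg (s := {0}ᶜ)
      fun _ ha ↦ isUnit_sub_algebraMap_of_mem_jacobson_bot hf ha
    have hcount : ({0}ᶜ : Set k).Countable :=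
      Set.countable_coe_iff.mp (hli.countable_of_rank_le_aleph0 h)
    rw [Set.compl_eq_univ_sdiff] at hcount
    exact absurd (hcount.of_sdiff (Set.countable_singleton 0)) Set.not_countable_univ

/-- (Amitsur) Let `k` be an uncountable field and let `R` be a commutative `k`-algebra whose
dimension as a `k`-vector space is countable. Then `R` is a Jacobson ring. -/
theorem stmt16 {k R : Type*} [Field k] [Uncountable k] [CommRing R] [Algebra k R]
    (h : Module.rank k R ≤ Cardinal.aleph0) : IsJacobsonRing R := by
  refine isJacobsonRing_iff_prime_eq.mpr fun P hP ↦ ?_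
  rw [Ideal.jacobson_eq_iff_jacobson_quotient_eq_bot]
  exact Ideal.jacobson_bot_eq_bot_of_rank_le_aleph0 (k := k) <|
    (LinearMap.rank_le_of_surjective (Ideal.Quotient.mkₐ k P).toLinearMap
      (Ideal.Quotient.mkₐ_surjective k P)).trans h
end
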